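/- arXiv:0906.0809 — 2 statements merged into one kernel-verified Lean document; each statement's English description precedes it below -/
import Mathlib

section
/- If a unit square (the laptop cross-section) is placed with its center at a corner of a quarter-plane (the table), then the area of the intersection of the square with the quarter-plane equals 1/4, for every orientation of the square. -/
open Real MeasureTheory

/-- The rectangle of width 1 and length `L`, centered at `c` and rotated by `θ`
(width measured across the first rotated coordinate). -/
def rect (c : ℝ × ℝ) (θ L : ℝ) : Set (ℝ × ℝ) :=
  {p | |Real.cos θ * (p.1 - c.1) + Real.sin θ * (p.2 - c.2)| ≤ 1 / 2 ∧
       |(-Real.sin θ) * (p.1 - c.1) + Real.cos θ * (p.2 - c.2)| ≤ L / 2}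

/-- The quarter-plane modeling the table corner. -/
def Q : Set (ℝ × ℝ) := {p | p.1 ≤ 0 ∧ p.2 ≤ 0}

/-!
The square centred at the origin is invariant under the rotation by `π / 2`, which permutes
the four closed quadrants cyclically. As the coordinate axes are null, the quadrants cut the
square into four pieces of equal area, and the square has area `1`.
-/

noncomputable def rotationProd (θ : ℝ) : ℝ × ℝ →ₗ[ℝ] ℝ × ℝ where
  toFun p := (cos θ * p.1 + sin θ * p.2, -sin θ * p.1 + cos θ * p.2)
  map_add' p q := by ext <;> simp <;> ring
  map_smul' r p := by ext <;> simp <;> ring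

@[simp]
lemma rotationProd_apply (θ : ℝ) (p : ℝ × ℝ) :
    rotationProd θ p = (cos θ * p.1 + sin θ * p.2, -sin θ * p.1 + cos θ * p.2) := rfl

lemma toMatrix_rotationProd (θ : ℝ) :
    LinearMap.toMatrix (Module.Basis.finTwoProd ℝ) (Module.Basis.finTwoProd ℝ) (rotationProd θ) =
      !![cos θ, sin θ; -sin θ, cos θ] := by
  ext i j
  fin_cases i <;> fin_cases j <;> simp [LinearMap.toMatrix_apply]

lemma det_rotationProd (θ : ℝ) : LinearMap.det (rotationProd θ) = 1 := by
  rw [← LinearMap.det_toMatrix (Module.Basis.finTwoProd ℝ), toMatrix_rotationProd,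
    Matrix.det_fin_two_of]
  linear_combination cos_sq_add_sin_sq θ

lemma volume_preimage_rotationProd (θ : ℝ) (s : Set (ℝ × ℝ)) :
    volume (rotationProd θ ⁻¹' s) = volume s := by
  simp [Measure.addHaar_preimage_linearMap, det_rotationProd]

lemma rect_eq_preimage (c : ℝ × ℝ) (θ L : ℝ) :
    rect c θ L = (· + -c) ⁻¹' (rotationProd θ ⁻¹'
      (Set.Icc (-(1 / 2)) (1 / 2) ×ˢ Set.Icc (-(L / 2)) (L / 2))) := by
  ext p
  simp [rect, abs_le, sub_eq_add_neg]
  tauto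

lemma measurableSet_rect (c : ℝ × ℝ) (θ L : ℝ) : MeasurableSet (rect c θ L) := by
  rw [rect_eq_preimage]
  exact (measurableSet_Icc.prod measurableSet_Icc).preimage
    (rotationProd θ).continuous_of_finiteDimensional.measurable |>.preimage (measurable_add_const _)

lemma volume_rect (c : ℝ × ℝ) (θ L : ℝ) :
    volume (rect c θ L) = ENNReal.ofReal L := by
  rw [rect_eq_preimage, measure_preimage_add_right, volume_preimage_rotationProd,
    Measure.volume_eq_prod, Measure.prod_prod, Real.volume_Icc, Real.volume_Icc]
  norm_num

lemma rotationProd_pi_div_two_preimage_rect (θ : ℝ) :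
    rotationProd (π / 2) ⁻¹' rect 0 θ 1 = rect 0 θ 1 := by
  ext p
  simp only [rect, Set.mem_preimage, Set.mem_ofPred_eq, rotationProd_apply, cos_pi_div_two,
    sin_pi_div_two, Prod.fst_zero, Prod.snd_zero, sub_zero]
  rw [and_comm, ← abs_neg]
  ring_nf

lemma volume_setOf_fst_eq_zero : volume {p : ℝ × ℝ | p.1 = 0} = 0 := by
  rw [show {p : ℝ × ℝ | p.1 = 0} = {0} ×ˢ Set.univ by ext; simp, Measure.volume_eq_prod,
    Measure.prod_prod, Real.volume_singleton, zero_mul]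

lemma volume_setOf_snd_eq_zero : volume {p : ℝ × ℝ | p.2 = 0} = 0 := by
  rw [show {p : ℝ × ℝ | p.2 = 0} = Set.univ ×ˢ {0} by ext; simp, Measure.volume_eq_prod,
    Measure.prod_prod, Real.volume_singleton, mul_zero]

lemma measure_inter_union_inter_eq_two_mul {α : Type*} [MeasurableSpace α] {μ : Measure α}
    {S X Y : Set α} (hSY : NullMeasurableSet (S ∩ Y) μ) (hXY : μ (X ∩ Y) = 0)
    (h : μ (S ∩ Y) = μ (S ∩ X)) : μ (S ∩ X ∪ S ∩ Y) = 2 * μ (S ∩ X) := by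
  have hd : AEDisjoint μ (S ∩ X) (S ∩ Y) :=
    measure_mono_null (Set.inter_subset_inter Set.inter_subset_right Set.inter_subset_right) hXY
  rw [measure_union₀ hSY hd, h, two_mul]

lemma volume_eq_four_mul_volume_inter_Q {S : Set (ℝ × ℝ)} (hS : MeasurableSet S)
    (hrot : rotationProd (π / 2) ⁻¹' S = S) : volume S = 4 * volume (S ∩ Q) := by
  set R := rotationProd (π / 2)
  have hR (p : ℝ × ℝ) : R p = (p.2, -p.1) := by simp [R]
  have hR_meas : Measurable R := R.continuous_of_finiteDimensional.measurable
  have hinv (X : Set (ℝ × ℝ)) : volume (S ∩ R ⁻¹' X) = volume (S ∩ X) := by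
    rw [← volume_preimage_rotationProd (π / 2) (S ∩ X), Set.preimage_inter, hrot]
  let H : Set (ℝ × ℝ) := {p | p.2 ≤ 0}
  have hH : MeasurableSet H := measurableSet_le measurable_snd measurable_const
  have hQ : MeasurableSet Q := measurableSet_Iic.prod measurableSet_Iic
  have hH_cover : H ∪ R ⁻¹' (R ⁻¹' H) = Set.univ := by
    ext p; simp [H, hR, le_total]
  have hQ_cover : Q ∪ R ⁻¹' Q = H := by
    ext p
    simp only [Q, H, Set.mem_union, Set.mem_preimage, Set.mem_ofPred_eq, hR]
    grind
  calc volume S = volume (S ∩ H ∪ S ∩ R ⁻¹' (R ⁻¹' H)) := by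
        rw [← Set.inter_union_distrib_left, hH_cover, Set.inter_univ]
    _ = 2 * volume (S ∩ H) := measure_inter_union_inter_eq_two_mul
        (hS.inter ((hH.preimage hR_meas).preimage hR_meas)).nullMeasurableSet
        (measure_mono_null (fun p hp => by simp_all [H]; linarith) volume_setOf_snd_eq_zero)
        (by rw [hinv, hinv])
    _ = 2 * (2 * volume (S ∩ Q)) := by
        rw [← measure_inter_union_inter_eq_two_mul
          (hS.inter (hQ.preimage hR_meas)).nullMeasurableSet
          (measure_mono_null (fun p hp => by simp_all [Q]; linarith) volume_setOf_fst_eq_zero)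
          (hinv Q), ← Set.inter_union_distrib_left, hQ_cover]
    _ = 4 * volume (S ∩ Q) := by ring

/-- A unit square centered at the corner of a quarter-plane has footprint of area exactly
`1/4`, for every orientation `θ`. -/
theorem unit_square_corner_footprint (θ : ℝ) :
    volume (rect (0, 0) θ 1 ∩ Q) = 1 / 4 := by
  have h := volume_eq_four_mul_volume_inter_Q (measurableSet_rect 0 θ 1)
    (rotationProd_pi_div_two_preimage_rect θ)
  rw [volume_rect, ENNReal.ofReal_one] at h
  exact (ENNReal.eq_div_iff (by norm_num) (by norm_num)).2 h.symm
end

section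
/- For a 1 × L rectangle with L > 1 centered at the corner of a quarter-plane, the area of the intersection with the quarter-plane is strictly greater than 1/4 unless the rectangle's long axis makes a 45-degree angle with the sides of the quarter-plane, in which case the area is exactly 1/4. -/
open Real MeasureTheory

/-!
Write `c = cos θ`, `s = sin θ`. The footprint is convex and has a vertex at the corner, so its
area is at least that of any triangle or quadrilateral with a vertex at the corner and the other
vertices in the footprint. Negating `(c, s)` leaves the footprint unchanged and exchanging `c` and
`s` reflects it in the diagonal, so we may assume `|c| ≤ s`. Then one of three things happens.
The long side `c x + s y = -1/2` of the rectangle may meet both axes inside the footprint, which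
then contains a triangle of area `1/(8cs)`; this exceeds `1/4` unless `c = s`, when the triangle
is the whole footprint. Otherwise the corner where that side meets a short side may lie in the
quarter-plane, giving a quadrilateral of area `L/4 + c(1 - L²)/(8s) > 1/4`. Otherwise a whole
short side lies in the quarter-plane, giving a triangle of area `L/4`.
-/

open Set
open scoped ENNReal

def wedge (v w : ℝ × ℝ) : ℝ := v.1 * w.2 - v.2 * w.1

@[simp] theorem wedge_zero_left (v : ℝ × ℝ) : wedge 0 v = 0 := by simp [wedge]
@[simp] theorem wedge_zero_right (v : ℝ × ℝ) : wedge v 0 = 0 := by simp [wedge]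
@[simp] theorem wedge_self (v : ℝ × ℝ) : wedge v v = 0 := by simp [wedge, mul_comm]
theorem wedge_anticomm (v w : ℝ × ℝ) : wedge v w = -wedge w v := by simp only [wedge]; ring

theorem Convex.smul_add_smul_mem_of_zero_mem {E : Type*} [AddCommGroup E] [Module ℝ E]
    {K : Set E} (hK : Convex ℝ K) (h0 : 0 ∈ K) {v w : E} (hv : v ∈ K) (hw : w ∈ K)
    {a b : ℝ} (ha : 0 ≤ a) (hb : 0 ≤ b) (hab : a + b ≤ 1) : a • v + b • w ∈ K := by
  rcases (add_nonneg ha hb).eq_or_lt with h | h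
  · obtain ⟨rfl, rfl⟩ : a = 0 ∧ b = 0 := ⟨by linarith, by linarith⟩
    simpa using h0
  have hvw : (a / (a + b)) • v + (b / (a + b)) • w ∈ K :=
    hK hv hw (by positivity) (by positivity) (by field_simp)
  convert hK.smul_mem_of_zero_mem h0 hvw ⟨h.le, hab⟩ using 1
  simp only [smul_add, smul_smul, mul_div_cancel₀ _ h.ne']

def stdTriangle : Set (ℝ × ℝ) := {q | 0 ≤ q.1 ∧ 0 ≤ q.2 ∧ q.1 + q.2 ≤ 1}

theorem convexHull_eq_stdTriangle : convexHull ℝ {0, (1, 0), (0, 1)} = stdTriangle := by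
  refine (convexHull_min ?_ ?_).antisymm fun q ⟨h1, h2, h12⟩ => ?_
  · rintro _ (rfl | rfl | rfl) <;> norm_num [stdTriangle]
  · rintro p ⟨hp1, hp2, hp⟩ q ⟨hq1, hq2, hq⟩ a b ha hb hab
    simp only [stdTriangle, mem_ofPred_eq, Prod.fst_add, Prod.snd_add, Prod.smul_fst,
      Prod.smul_snd, smul_eq_mul]
    refine ⟨by positivity, by positivity, by nlinarith⟩
  · simpa using (convex_convexHull ℝ _).smul_add_smul_mem_of_zero_mem
      (subset_convexHull ℝ {(0 : ℝ × ℝ), (1, 0), (0, 1)} (by simp)) (v := (1, 0))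
      (subset_convexHull ℝ _ (by simp)) (w := (0, 1)) (subset_convexHull ℝ _ (by simp))
      h1 h2 h12

theorem volume_stdTriangle : volume stdTriangle = ENNReal.ofReal (1 / 2) := by
  have hS : IsClosed stdTriangle :=
    (isClosed_le continuous_const continuous_fst).inter
      ((isClosed_le continuous_const continuous_snd).inter
        (isClosed_le (continuous_fst.add continuous_snd) continuous_const))
  have hslice (x : ℝ) : volume (Prod.mk x ⁻¹' stdTriangle) =
      (Icc 0 1).indicator (fun x => ENNReal.ofReal (1 - x)) x := by
    by_cases hx0 : 0 ≤ x
    · have : Prod.mk x ⁻¹' stdTriangle = Icc 0 (1 - x) := by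
        ext y; simp [stdTriangle, hx0, le_sub_iff_add_le']
      rw [this, Real.volume_Icc, sub_zero]
      by_cases hx1 : x ≤ 1
      · rw [indicator_of_mem (show x ∈ Icc 0 1 from ⟨hx0, hx1⟩)]
      · rw [indicator_of_notMem (fun h => hx1 h.2), ENNReal.ofReal_of_nonpos (by linarith)]
    · have : Prod.mk x ⁻¹' stdTriangle = ∅ := by ext y; simp [stdTriangle, hx0]
      rw [this, measure_empty, indicator_of_notMem (fun h => hx0 h.1)]
  rw [Measure.volume_eq_prod, Measure.prod_apply hS.measurableSet]
  simp_rw [hslice]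
  rw [lintegral_indicator measurableSet_Icc, ← ofReal_integral_eq_lintegral_ofReal,
    integral_Icc_eq_integral_Ioc, ← intervalIntegral.integral_of_le zero_le_one,
    intervalIntegral.integral_sub intervalIntegrable_const intervalIntegral.intervalIntegrable_id]
  · norm_num [integral_id]
  · exact (continuous_const.sub continuous_id).integrableOn_Icc
  · exact ae_restrict_of_forall_mem measurableSet_Icc fun x hx => by simp [hx.2]

theorem volume_convexHull_zero_pair (v w : ℝ × ℝ) :
    volume (convexHull ℝ {0, v, w}) = ENNReal.ofReal (|wedge v w| / 2) := by
  let M : ℝ × ℝ →ₗ[ℝ] ℝ × ℝ :=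
    (LinearMap.fst ℝ ℝ ℝ).smulRight v + (LinearMap.snd ℝ ℝ ℝ).smulRight w
  have hM : convexHull ℝ {0, v, w} = M '' convexHull ℝ {0, (1, 0), (0, 1)} := by
    simp [LinearMap.image_convexHull, image_insert_eq, M]
  have hdet : LinearMap.det M = wedge v w := by
    rw [← LinearMap.det_toMatrix (Module.Basis.finTwoProd ℝ), Matrix.det_fin_two]
    simp [LinearMap.toMatrix_apply, M, wedge]
    ring
  rw [hM, convexHull_eq_stdTriangle, Measure.addHaar_image_linearMap, volume_stdTriangle, hdet,
    ← ENNReal.ofReal_mul (abs_nonneg _), mul_one_div]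

theorem ofReal_le_volume_of_triangle {K : Set (ℝ × ℝ)} (hK : Convex ℝ K) {v w : ℝ × ℝ}
    (h0 : 0 ∈ K) (hv : v ∈ K) (hw : w ∈ K) :
    ENNReal.ofReal (|wedge v w| / 2) ≤ volume K := by
  rw [← volume_convexHull_zero_pair]
  exact measure_mono (convexHull_min (by rintro _ (rfl | rfl | rfl) <;> assumption) hK)

theorem ofReal_le_volume_of_quadrilateral {K : Set (ℝ × ℝ)} (hK : Convex ℝ K)
    {a d b : ℝ × ℝ} (h0 : 0 ∈ K) (ha : a ∈ K) (hd : d ∈ K) (hb : b ∈ K)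
    (had : 0 ≤ wedge a d) (hdb : 0 ≤ wedge d b) :
    ENNReal.ofReal ((wedge a d + wedge d b) / 2) ≤ volume K := by
  rcases eq_or_ne d 0 with rfl | hd0
  · simp
  let f : ℝ × ℝ →ₗ[ℝ] ℝ := d.2 • .fst ℝ ℝ ℝ - d.1 • .snd ℝ ℝ ℝ
  have hf (p : ℝ × ℝ) : f p = wedge p d := by simp [f, wedge]; ring
  -- The two triangles lie on opposite sides of the line `ker f` through `0` and `d`.
  have hT1 : convexHull ℝ {0, a, d} ⊆ {p | 0 ≤ f p} :=
    convexHull_min (by simp [insert_subset_iff, hf, had])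
      (convex_halfSpace_ge f.isLinear 0)
  have hT2 : convexHull ℝ {0, d, b} ⊆ {p | f p ≤ 0} :=
    convexHull_min (by simp [insert_subset_iff, hf, wedge_anticomm b d, hdb])
      (convex_halfSpace_le f.isLinear 0)
  have hker : LinearMap.ker f ≠ ⊤ := by
    rw [Ne, LinearMap.ker_eq_top]
    intro h
    have h1 := LinearMap.congr_fun h (1, 0)
    have h2 := LinearMap.congr_fun h (0, 1)
    simp only [hf, wedge, LinearMap.zero_apply] at h1 h2
    exact hd0 (Prod.ext (by simp; linarith) (by simp; linarith))
  have hT12 : volume (convexHull ℝ {0, a, d} ∩ convexHull ℝ {0, d, b}) = 0 :=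
    measure_mono_null (fun p hp => le_antisymm (hT2 hp.2) (hT1 hp.1))
      (Measure.addHaar_submodule volume _ hker)
  calc ENNReal.ofReal ((wedge a d + wedge d b) / 2)
      = volume (convexHull ℝ {0, a, d}) + volume (convexHull ℝ {0, d, b}) := by
        rw [volume_convexHull_zero_pair, volume_convexHull_zero_pair, abs_of_nonneg had,
          abs_of_nonneg hdb, ← ENNReal.ofReal_add (by positivity) (by positivity), add_div]
    _ = volume (convexHull ℝ {0, a, d} ∪ convexHull ℝ {0, d, b}) :=
        (measure_union₀ ((convex_convexHull ℝ _).nullMeasurableSet _) hT12).symm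
    _ ≤ volume K := by
        refine measure_mono (union_subset (convexHull_min ?_ hK) (convexHull_min ?_ hK)) <;>
          rintro _ (rfl | rfl | rfl) <;> assumption

theorem ofReal_quarter : ENNReal.ofReal (1 / 4) = 1 / 4 := by
  rw [ENNReal.ofReal_div_of_pos (by norm_num)]
  norm_num

theorem quarter_lt_ofReal_iff {x : ℝ} :
    (1 / 4 : ℝ≥0∞) < ENNReal.ofReal x ↔ 1 / 4 < x := by
  rw [← ofReal_quarter, ENNReal.ofReal_lt_ofReal_iff_of_nonneg (by norm_num)]

def footprint (c s L : ℝ) : Set (ℝ × ℝ) :=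
  {p | |c * p.1 + s * p.2| ≤ 1 / 2 ∧ |-s * p.1 + c * p.2| ≤ L / 2 ∧ p.1 ≤ 0 ∧ p.2 ≤ 0}

theorem rect_zero_inter_Q (θ L : ℝ) :
    rect (0, 0) θ L ∩ Q = footprint (cos θ) (sin θ) L := by
  ext p
  simp [rect, Q, footprint, and_assoc]

section footprint

variable {c s L : ℝ}

theorem convex_footprint (c s L : ℝ) : Convex ℝ (footprint c s L) := by
  rintro p ⟨hp1, hp2, hp3, hp4⟩ q ⟨hq1, hq2, hq3, hq4⟩ a b ha hb hab
  rw [abs_le] at hp1 hp2 hq1 hq2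
  simp only [footprint, mem_ofPred_eq, Prod.fst_add, Prod.snd_add, Prod.smul_fst, Prod.smul_snd,
    smul_eq_mul, abs_le]
  refine ⟨⟨?_, ?_⟩, ⟨?_, ?_⟩, ?_, ?_⟩ <;> nlinarith

theorem zero_mem_footprint (hL : 0 ≤ L) : (0 : ℝ × ℝ) ∈ footprint c s L := by
  simp only [footprint, mem_ofPred_eq, Prod.fst_zero, Prod.snd_zero, mul_zero, add_zero, abs_zero]
  refine ⟨by norm_num, by positivity, le_rfl, le_rfl⟩

theorem footprint_neg : footprint (-c) (-s) L = footprint c s L := by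
  ext p
  simp only [footprint, mem_ofPred_eq]
  rw [← abs_neg, ← abs_neg (-(-s) * p.1 + -c * p.2)]
  ring_nf

theorem volume_footprint_swap : volume (footprint s c L) = volume (footprint c s L) := by
  have : footprint c s L = Prod.swap ⁻¹' footprint s c L := by
    ext p
    simp only [footprint, mem_ofPred_eq, mem_preimage, Prod.fst_swap, Prod.snd_swap]
    rw [← abs_neg (-c * p.2 + s * p.1)]
    ring_nf
    tauto
  rw [this]
  exact (Measure.measurePreserving_swap.measure_preimage_emb
    MeasurableEquiv.prodComm.measurableEmbedding _).symm

theorem rotate_mem_footprint (hcs : c ^ 2 + s ^ 2 = 1) {u v : ℝ} (hu : |u| ≤ 1 / 2)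
    (hv : |v| ≤ L / 2) (hx : c * u - s * v ≤ 0) (hy : s * u + c * v ≤ 0) :
    (c * u - s * v, s * u + c * v) ∈ footprint c s L := by
  refine ⟨?_, ?_, hx, hy⟩
  · rwa [show c * (c * u - s * v) + s * (s * u + c * v) = u by linear_combination u * hcs]
  · rwa [show -s * (c * u - s * v) + c * (s * u + c * v) = v by linear_combination v * hcs]

theorem quarter_lt_volume_footprint_of_axes (hc : 0 < c) (hs : 0 < s)
    (hcs : c ^ 2 + s ^ 2 = 1) (hne : c ≠ s) (hsL : s ≤ c * L) (hcL : c ≤ s * L) :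
    1 / 4 < volume (footprint c s L) := by
  obtain ⟨a, ha, hca⟩ : ∃ a, 0 < a ∧ c * a = 1 / 2 :=
    ⟨(2 * c)⁻¹, by positivity, by field_simp⟩
  obtain ⟨b, hb, hsb⟩ : ∃ b, 0 < b ∧ s * b = 1 / 2 :=
    ⟨(2 * s)⁻¹, by positivity, by field_simp⟩
  have hA : (-a, 0) ∈ footprint c s L := by
    refine ⟨abs_le.2 ⟨?_, ?_⟩, abs_le.2 ⟨?_, ?_⟩, ?_, le_rfl⟩ <;>
      nlinarith [mul_le_mul_of_nonneg_right hsL ha.le]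
  have hB : (0, -b) ∈ footprint c s L := by
    refine ⟨abs_le.2 ⟨?_, ?_⟩, abs_le.2 ⟨?_, ?_⟩, le_rfl, ?_⟩ <;>
      nlinarith [mul_le_mul_of_nonneg_right hcL hb.le]
  refine (quarter_lt_ofReal_iff.2 ?_).trans_le (ofReal_le_volume_of_triangle
    (convex_footprint c s L) (zero_mem_footprint (by nlinarith)) hA hB)
  have : 2 * (c * s) < 1 := by nlinarith [sq_pos_of_ne_zero (sub_ne_zero.2 hne)]
  simp only [wedge, neg_mul_neg, mul_zero, sub_zero]
  rw [abs_of_pos (mul_pos ha hb)]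
  nlinarith [mul_pos ha hb]

theorem quarter_lt_volume_footprint_of_corner (hcs : c ^ 2 + s ^ 2 = 1) (hL : 1 < L)
    (h : |c| * L ≤ s) : 1 / 4 < volume (footprint c s L) := by
  obtain ⟨hcL, hcL'⟩ := abs_le.1
    (show |c * L| ≤ s by rwa [abs_mul, abs_of_pos (by linarith : (0 : ℝ) < L)])
  obtain ⟨hc, hc'⟩ := abs_le.1 ((le_mul_of_one_le_right (abs_nonneg c) hL.le).trans h)
  have hs : 0 < s := by nlinarith
  have hcs' : c < s := by rcases le_or_gt c 0 with hc0 | hc0 <;> nlinarith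
  obtain ⟨b, hb, hsb⟩ : ∃ b, 0 < b ∧ s * b = 1 / 2 :=
    ⟨(2 * s)⁻¹, by positivity, by field_simp⟩
  have hA : (-(L * b), 0) ∈ footprint c s L := by
    refine ⟨abs_le.2 ⟨?_, ?_⟩, abs_le.2 ⟨?_, ?_⟩, ?_, le_rfl⟩ <;>
      nlinarith [mul_le_mul_of_nonneg_right hcL hb.le, mul_le_mul_of_nonneg_right hcL' hb.le]
  have hD : (c * (-1 / 2) - s * (L / 2), s * (-1 / 2) + c * (L / 2)) ∈ footprint c s L :=
    rotate_mem_footprint hcs (by norm_num [abs_div]) (by rw [abs_of_pos (by linarith)])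
      (by nlinarith) (by linarith)
  have hB : (0, -b) ∈ footprint c s L := by
    refine ⟨abs_le.2 ⟨?_, ?_⟩, abs_le.2 ⟨?_, ?_⟩, le_rfl, ?_⟩ <;>
      nlinarith [mul_le_mul_of_nonneg_right hc hb.le, mul_le_mul_of_nonneg_right hc' hb.le]
  refine (quarter_lt_ofReal_iff.2 ?_).trans_le (ofReal_le_volume_of_quadrilateral
    (convex_footprint c s L) (zero_mem_footprint (by linarith)) hA hD hB ?_ ?_)
  · have key : 0 < (L - 1) * (2 * s - c * (L + 1)) := mul_pos (by linarith) (by linarith)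
    simp only [wedge]
    nlinarith [mul_pos hb key]
  · simp only [wedge]
    nlinarith [mul_nonneg (mul_nonneg (by linarith : 0 ≤ L) hb.le)
      (by linarith : 0 ≤ s - c * L)]
  · simp only [wedge]
    nlinarith [mul_nonneg hb.le (by nlinarith : 0 ≤ c + s * L)]

theorem quarter_lt_volume_footprint_of_short_side (hcs : c ^ 2 + s ^ 2 = 1) (hL : 1 < L)
    (hc : |c| ≤ s * L) (hs : |s| ≤ -c * L) : 1 / 4 < volume (footprint c s L) := by
  obtain ⟨hc, hc'⟩ := abs_le.1 hc
  obtain ⟨hs, hs'⟩ := abs_le.1 hs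
  have hL2 : |L / 2| ≤ L / 2 := by rw [abs_of_pos (by linarith)]
  refine (quarter_lt_ofReal_iff.2 ?_).trans_le (ofReal_le_volume_of_triangle
    (convex_footprint c s L) (zero_mem_footprint (by linarith))
    (rotate_mem_footprint (u := 1 / 2) hcs (by norm_num) hL2 (by linarith) (by linarith))
    (rotate_mem_footprint (u := -1 / 2) hcs (by norm_num [abs_div]) hL2 (by linarith)
      (by linarith)))
  rw [show wedge (c * (1 / 2) - s * (L / 2), s * (1 / 2) + c * (L / 2))
      (c * (-1 / 2) - s * (L / 2), s * (-1 / 2) + c * (L / 2)) = L / 2 by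
    simp only [wedge]; linear_combination (L / 2) * hcs, abs_of_pos (by linarith)]
  linarith

theorem quarter_lt_volume_footprint (hcs : c ^ 2 + s ^ 2 = 1) (hne : c ≠ s) (hL : 1 < L) :
    1 / 4 < volume (footprint c s L) := by
  wlog habs : |c| ≤ |s| generalizing c s
  · rw [← volume_footprint_swap]
    exact this (by linarith) hne.symm (le_of_not_ge habs)
  wlog hs : 0 ≤ s generalizing c s
  · rw [← footprint_neg]
    exact this (by linarith [neg_sq c, neg_sq s]) (by contrapose! hne; linarith) (by simpa)
      (by linarith)
  rw [abs_of_nonneg hs] at habs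
  rcases le_or_gt (|c| * L) s with h | h
  · exact quarter_lt_volume_footprint_of_corner hcs hL h
  rcases lt_or_ge 0 c with hc | hc
  · rw [abs_of_pos hc] at h habs
    exact quarter_lt_volume_footprint_of_axes hc (by linarith) hcs hne h.le (by nlinarith)
  · rw [abs_of_nonpos hc] at h habs
    exact quarter_lt_volume_footprint_of_short_side hcs hL
      (by rw [abs_of_nonpos hc]; nlinarith) (by rw [abs_of_nonneg hs]; linarith)

theorem volume_footprint_self (hc : c ^ 2 = 1 / 2) (hL : 1 ≤ L) :
    volume (footprint c c L) = 1 / 4 := by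
  wlog hc0 : 0 < c generalizing c
  · rw [← footprint_neg]
    refine this (by rwa [neg_sq]) (neg_pos.2 (lt_of_le_of_ne (not_lt.1 hc0) ?_))
    rintro rfl
    norm_num at hc
  obtain ⟨a, ha, hca⟩ : ∃ a, 0 < a ∧ c * a = 1 / 2 :=
    ⟨(2 * c)⁻¹, by positivity, by field_simp⟩
  have hA : (-a, 0) ∈ footprint c c L := by
    refine ⟨abs_le.2 ⟨?_, ?_⟩, abs_le.2 ⟨?_, ?_⟩, ?_, le_rfl⟩ <;> nlinarith
  have hB : (0, -a) ∈ footprint c c L := by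
    refine ⟨abs_le.2 ⟨?_, ?_⟩, abs_le.2 ⟨?_, ?_⟩, le_rfl, ?_⟩ <;> nlinarith
  have htri : footprint c c L = convexHull ℝ {0, (-a, 0), (0, -a)} := by
    refine Subset.antisymm (fun p ⟨hp, _, hp1, hp2⟩ => ?_)
      (convexHull_min ?_ (convex_footprint c c L))
    · convert (convex_convexHull ℝ _).smul_add_smul_mem_of_zero_mem
        (subset_convexHull ℝ {0, (-a, 0), (0, -a)} (by simp)) (v := (-a, 0))
        (subset_convexHull ℝ _ (by simp)) (w := (0, -a)) (subset_convexHull ℝ _ (by simp))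
        (by nlinarith : 0 ≤ -2 * c * p.1) (by nlinarith : 0 ≤ -2 * c * p.2)
        (by nlinarith [(abs_le.1 hp).1])
      exact Prod.ext (by simp; linear_combination (-2 * p.1) * hca)
        (by simp; linear_combination (-2 * p.2) * hca)
    · simp [insert_subset_iff, hA, hB, zero_mem_footprint (by linarith : 0 ≤ L)]
  rw [htri, volume_convexHull_zero_pair, ← ofReal_quarter]
  congr 1
  simp only [wedge, neg_mul_neg, mul_zero, sub_zero]
  rw [abs_of_pos (mul_pos ha ha)]
  nlinarith

end footprint

theorem Real.sin_eq_cos_iff {θ : ℝ} : sin θ = cos θ ↔ ∃ k : ℤ, θ = π / 4 + k * π := by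
  have h : sin (θ - π / 4) = (sin θ - cos θ) * (√2 / 2) := by
    rw [sin_sub, cos_pi_div_four, sin_pi_div_four]; ring
  rw [← sub_eq_zero, ← mul_eq_zero_iff_right (by positivity : √2 / 2 ≠ 0), ← h,
    sin_eq_zero_iff]
  exact exists_congr fun k => by constructor <;> intro h <;> linarith

/-- For a `1 × L` rectangle with `L > 1` centered at the corner of a quarter-plane, the
footprint area is exactly `1/4` in the symmetric 45-degree positions, and strictly greater
than `1/4` for every other orientation. -/
theorem rectangle_corner_footprint (L : ℝ) (hL : 1 < L) (θ : ℝ) :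
    ((∃ k : ℤ, θ = π / 4 + k * π) → volume (rect (0, 0) θ L ∩ Q) = 1 / 4) ∧
      ((¬∃ k : ℤ, θ = π / 4 + k * π) → volume (rect (0, 0) θ L ∩ Q) > 1 / 4) := by
  rw [rect_zero_inter_Q, ← Real.sin_eq_cos_iff]
  refine ⟨fun h => ?_, fun h =>
    quarter_lt_volume_footprint (cos_sq_add_sin_sq θ) (Ne.symm h) hL⟩
  have hcos := sin_sq_add_cos_sq θ
  rw [h] at hcos ⊢
  exact volume_footprint_self (by linarith) hL.le
end
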